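/- arXiv:1402.3283 — 2 statements merged into one kernel-verified Lean document; each statement's English description precedes it below -/
import Mathlib

section
/- (z-Recurrent Decomposition) Given any sandpile s : V → ℤ and any z ∈ V, there is a unique triple (ρ, m, v) with ρ ∈ Rec(z), m ∈ ℤ, and v : V → ℤ satisfying v(z) = 0, such that s = ρ + m·δ_z + Δv. Moreover, s is stabilizable if and only if m < 0. -/
open scoped BigOperators
open Classical Filter

noncomputable section

namespace ThresholdState

variable {V : Type*} [Fintype V] [DecidableEq V]

/-- `A i j` is the number of directed edges from `i` to `j`. -/
def outdeg (A : V → V → ℕ) (i : V) : ℕ := ∑ j, A i j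

def indeg (A : V → V → ℕ) (i : V) : ℕ := ∑ j, A j i

/-- Eulerian: out-degree equals in-degree at every vertex. -/
def Eulerian (A : V → V → ℕ) : Prop := ∀ i, outdeg A i = indeg A i

/-- (Strongly) connected multigraph. -/
def Connected (A : V → V → ℕ) : Prop :=
  ∀ i j : V, Relation.ReflTransGen (fun a b => 0 < A a b) i j

def deg (A : V → V → ℕ) (i : V) : ℕ := outdeg A i

/-- Graph Laplacian: `Δu(i) = -deg(i)·u(i) + Σ_{e incoming to i} u(e⁻)`. -/
def lap (A : V → V → ℕ) (u : V → ℤ) (i : V) : ℤ :=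
  -(deg A i : ℤ) * u i + ∑ j, (A j i : ℤ) * u j

def delta (z : V) : V → ℤ := fun j => if j = z then 1 else 0

/-- Toppling vertex `i`: replace `s` by `s + Δδ_i`. -/
def toppleAt (A : V → V → ℕ) (s : V → ℤ) (i : V) : V → ℤ :=
  fun j => s j + lap A (delta i) j

def applySeq (A : V → V → ℕ) (s : V → ℤ) (l : List V) : V → ℤ :=
  l.foldl (toppleAt A) s

/-- A legal toppling sequence (avoiding the forbidden set `F`): each toppled
vertex is unstable when toppled and does not lie in `F`. -/
def ValidSeq (A : V → V → ℕ) (F : V → Prop) : (V → ℤ) → List V → Prop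
  | _, [] => True
  | s, i :: l => ¬ F i ∧ (deg A i : ℤ) ≤ s i ∧ ValidSeq A F (toppleAt A s i) l

/-- Stable at every non-forbidden vertex. -/
def StableOff (A : V → V → ℕ) (F : V → Prop) (s : V → ℤ) : Prop :=
  ∀ i, ¬ F i → s i ≤ (deg A i : ℤ) - 1

def StabilizesTo (A : V → V → ℕ) (F : V → Prop) (s : V → ℤ) (l : List V) : Prop :=
  ValidSeq A F s l ∧ StableOff A F (applySeq A s l)

def StabilizableVia (A : V → V → ℕ) (F : V → Prop) (s : V → ℤ) : Prop :=
  ∃ l, StabilizesTo A F s l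

/-- Stabilizable with no forbidden vertices. -/
def Stabilizable (A : V → V → ℕ) (s : V → ℤ) : Prop :=
  StabilizableVia A (fun _ => False) s

def stabSeq (A : V → V → ℕ) (F : V → Prop) (s : V → ℤ) : List V :=
  if h : StabilizableVia A F s then h.choose else []

def stabilizeVia (A : V → V → ℕ) (F : V → Prop) (s : V → ℤ) : V → ℤ :=
  applySeq A s (stabSeq A F s)

/-- Odometer: number of topplings at each vertex (`0` everywhere if not stabilizable). -/
def odometerVia (A : V → V → ℕ) (F : V → Prop) (s : V → ℤ) : V → ℕ :=
  fun i => (stabSeq A F s).count i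

def sinkStabilize (A : V → V → ℕ) (z : V) (s : V → ℤ) : V → ℤ :=
  stabilizeVia A (fun i => i = z) s

def sinkOdometer (A : V → V → ℕ) (z : V) (s : V → ℤ) : V → ℕ :=
  odometerVia A (fun i => i = z) s

/-- `ρ` is `z`-recurrent (Dhar's burning test): `ρ(z) = deg z`, `ρ(i) ≤ deg i - 1`
off the sink, and every site other than `z` topples exactly once in the
stabilization of `ρ + Δδ_z` with sink `z`. -/
def ZRec (A : V → V → ℕ) (z : V) (ρ : V → ℤ) : Prop :=
  ρ z = (deg A z : ℤ) ∧ (∀ i, i ≠ z → ρ i ≤ (deg A i : ℤ) - 1) ∧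
  ∃ l : List V, StabilizesTo A (fun i => i = z) (fun j => ρ j + lap A (delta z) j) l ∧
    ∀ i, i ≠ z → l.count i = 1

/-- `κ` = number of `z`-recurrent sandpiles. -/
def kappa (A : V → V → ℕ) (z : V) : ℕ := Nat.card {ρ : V → ℤ // ZRec A z ρ}

def totalMass (s : V → ℤ) : ℤ := ∑ i, s i

/-- Open addition operator `â_i` (with sink `z`). -/
def openAdd (A : V → V → ℕ) (z i : V) (ρ : V → ℤ) : V → ℤ :=
  fun j => if j = z then (deg A z : ℤ) else sinkStabilize A z (fun k => ρ k + delta i k) j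

/-- `â_i⁻¹` on `Rec(z)`. -/
def openAddInv (A : V → V → ℕ) (z i : V) (ρ : V → ℤ) : V → ℤ :=
  if h : ∃ ρ', ZRec A z ρ' ∧ openAdd A z i ρ' = ρ then h.choose else ρ

/-- Burst size `av_{i→z}(ρ) = |â_i⁻¹ρ| - |ρ| + 1`. -/
def burst (A : V → V → ℕ) (z i : V) (ρ : V → ℤ) : ℤ :=
  totalMass (openAddInv A z i ρ) - totalMass ρ + 1

/-- The `z`-recurrent decomposition `s = ρ + m·δ_z + Δv` with `ρ ∈ Rec(z)`, `v(z)=0`. -/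
def ZDecomp (A : V → V → ℕ) (z : V) (s ρ : V → ℤ) (m : ℤ) (v : V → ℤ) : Prop :=
  ZRec A z ρ ∧ v z = 0 ∧ ∀ j, s j = ρ j + m * delta z j + lap A v j

/-- `R_z(s)`: the `z`-recurrent representative of `s`. -/
def Rz (A : V → V → ℕ) (z : V) (s : V → ℤ) : V → ℤ :=
  if h : ∃ ρ, ∃ m, ∃ v, ZDecomp A z s ρ m v then h.choose else s

/-- `m_z(s)`: the integer in the `z`-recurrent decomposition of `s`. -/
def mz (A : V → V → ℕ) (z : V) (s : V → ℤ) : ℤ :=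
  if h : ∃ m, ∃ ρ, ∃ v, ZDecomp A z s ρ m v then h.choose else 0

/-- Closed addition operator `a_i`. -/
def closedAdd (A : V → V → ℕ) (i : V) (s : V → ℤ) : V → ℤ :=
  if Stabilizable A (fun j => s j + delta i j) then
    stabilizeVia A (fun _ => False) (fun j => s j + delta i j)
  else fun j => s j + delta i j

/-- The closed chain after making the additions listed in `w` (in order). -/
def chain (A : V → V → ℕ) (s0 : V → ℤ) (w : List V) : V → ℤ :=
  w.foldl (fun s i => closedAdd A i s) s0

/-- `w` is a threshold word for `s0`: the chain first becomes non-stabilizable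
exactly after the additions in `w`, i.e. `τ = |w|` on the cylinder of `w`. -/
def IsThresholdWord (A : V → V → ℕ) (s0 : V → ℤ) (w : List V) : Prop :=
  ¬ Stabilizable A (chain A s0 w) ∧
  ∀ w' : List V, w' <+: w → w' ≠ w → Stabilizable A (chain A s0 w')

def wordProb (α : V → ℝ) (w : List V) : ℝ := (w.map α).prod

/-- `P_{s0}(E at the threshold time)`: total probability of the (disjoint)
cylinders of threshold words satisfying `E`. -/
def thresholdProb (A : V → V → ℕ) (α : V → ℝ) (s0 : V → ℤ) (E : List V → Prop) : ℝ :=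
  ∑' w : List V, if IsThresholdWord A s0 w ∧ E w then wordProb α w else 0

/-- `E_{s0}[f at the threshold time]`. -/
def thresholdExp (A : V → V → ℕ) (α : V → ℝ) (s0 : V → ℤ) (f : List V → ℝ) : ℝ :=
  ∑' w : List V, if IsThresholdWord A s0 w then wordProb α w * f w else 0

end ThresholdState

/-!
Stabilizability depends only on the class of `s` modulo `Δ(ℤ^V)`: constants are harmonic on an
Eulerian graph, so an odometer can always be shifted to be nonnegative, and by the least action
principle a nonnegative `ν` with `s + Δν` stable bounds every legal toppling sequence. A
`z`-recurrent `ρ` burns back to itself after receiving `Δδ_z`. Hence from `ρ + m δ_z` with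
`m ≥ 0` one can fire `z` and burn forever, so it is not stabilizable, while for `m < 0` it is
already stable; and comparing `N` burnings of `ρ₁` with the odometer leading from `ρ₁` to
`ρ₂ + m δ_z` gives uniqueness.

For existence, repeatedly add `Δδ_z` to `s` and stabilize with sink `z` (possible as the graph is
connected). The results are bounded off `z`, hence eventually periodic, and no step fires a
vertex twice. Over a period of length `k` the total odometer `W` makes `k δ_z + W` harmonic off
`z`, so by the minimum principle `W = k` off `z`: every step fires each non-sink vertex exactly
once, which is the burning test.
-/

namespace ThresholdState

lemma exists_nat_ge {ι : Type*} [Finite ι] (f : ι → ℤ) : ∃ N : ℕ, ∀ i, f i ≤ N := by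
  obtain ⟨M, hM⟩ := Finite.bddAbove_range f
  exact ⟨M.toNat, fun i => (hM ⟨i, rfl⟩).trans (Int.self_le_toNat M)⟩

variable {V : Type*}

section CountVec

variable [DecidableEq V]

def countVec (l : List V) : V → ℤ := fun i => (l.count i : ℤ)

@[simp]
lemma countVec_nil : countVec ([] : List V) = 0 := by
  funext i
  simp [countVec]

lemma countVec_cons (a : V) (l : List V) : countVec (a :: l) = delta a + countVec l := by
  funext i
  by_cases h : i = a
  · subst h
    simp [countVec, delta, add_comm]
  · simp [countVec, delta, h, Ne.symm h]

lemma countVec_append (l₁ l₂ : List V) : countVec (l₁ ++ l₂) = countVec l₁ + countVec l₂ := by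
  funext i
  simp [countVec, List.count_append]

lemma countVec_nonneg (l : List V) : 0 ≤ countVec l := fun _ => Int.natCast_nonneg _

lemma countVec_flatten_replicate (n : ℕ) (l : List V) :
    countVec (List.replicate n l).flatten = (n : ℤ) • countVec l := by
  induction n with
  | zero => simp
  | succ n ih =>
    rw [List.replicate_succ, List.flatten_cons, countVec_append, ih]
    push_cast
    rw [add_smul, one_smul, add_comm]

lemma sum_countVec [Fintype V] (l : List V) : ∑ i, countVec l i = l.length := by
  have := Multiset.sum_count_eq_card (s := Finset.univ) (m := (l : Multiset V))
    fun a _ => Finset.mem_univ a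
  simp only [Multiset.coe_count, Multiset.coe_card] at this
  simp only [countVec]
  exact_mod_cast this

end CountVec

variable [Fintype V]

section Laplacian

variable (A : V → V → ℕ)

lemma lap_add (u v : V → ℤ) : lap A (u + v) = lap A u + lap A v := by
  funext i
  simp only [lap, Pi.add_apply, mul_add, Finset.sum_add_distrib]
  ring

lemma lap_smul (c : ℤ) (u : V → ℤ) : lap A (c • u) = c • lap A u := by
  funext i
  simp only [lap, Pi.smul_apply, smul_eq_mul, mul_add, Finset.mul_sum]
  ring_nf

lemma lap_neg (u : V → ℤ) : lap A (-u) = -lap A u := by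
  simpa using lap_smul A (-1) u

lemma lap_sub (u v : V → ℤ) : lap A (u - v) = lap A u - lap A v := by
  rw [sub_eq_add_neg, lap_add, lap_neg, ← sub_eq_add_neg]

lemma sum_lap (u : V → ℤ) : ∑ i, lap A u i = 0 := by
  simp only [lap, Finset.sum_add_distrib, neg_mul, Finset.sum_neg_distrib,
    Finset.sum_comm (γ := V) (f := fun i j => (A j i : ℤ) * u j), ← Finset.sum_mul, deg, outdeg]
  push_cast
  exact neg_add_cancel _

@[simp]
lemma lap_zero : lap A 0 = 0 := by
  simpa using lap_smul A 0 0

lemma lap_nonneg_of_eq_zero {u : V → ℤ} (hu : 0 ≤ u) {i : V} (hi : u i = 0) :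
    0 ≤ lap A u i := by
  simp only [lap, hi, mul_zero, zero_add]
  exact Finset.sum_nonneg fun k _ => mul_nonneg (Int.natCast_nonneg _) (hu k)

variable {A}

lemma lap_eq_sum_sub (hEul : Eulerian A) (u : V → ℤ) (i : V) :
    lap A u i = ∑ k, (A k i : ℤ) * (u k - u i) := by
  have hdeg : (deg A i : ℤ) = ∑ k, (A k i : ℤ) := by
    rw [deg, hEul i, indeg]
    push_cast
    rfl
  simp only [lap, hdeg, mul_sub, Finset.sum_sub_distrib, ← Finset.sum_mul]
  ring

lemma lap_const (hEul : Eulerian A) (c : ℤ) : lap A (fun _ => c) = 0 := by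
  funext i
  simp [lap_eq_sum_sub hEul]

lemma eq_of_lap_eq_zero_of_forall_le (hEul : Eulerian A) {h : V → ℤ} {a b : V}
    (hmin : ∀ k, h b ≤ h k) (hb : lap A h b = 0) (hab : 0 < A a b) : h a = h b := by
  rw [lap_eq_sum_sub hEul] at hb
  have hterm := (Finset.sum_eq_zero_iff_of_nonneg fun k _ =>
    mul_nonneg (Int.natCast_nonneg (A k b)) (sub_nonneg.2 (hmin k))).1 hb a (Finset.mem_univ a)
  have hA : (A a b : ℤ) ≠ 0 := by exact_mod_cast hab.ne'
  linarith [(mul_eq_zero.1 hterm).resolve_left hA]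

lemma le_of_lap_eq_zero_off (hEul : Eulerian A) (hConn : Connected A) {z : V} {h : V → ℤ}
    (hh : ∀ j, j ≠ z → lap A h j = 0) (j : V) : h z ≤ h j := by
  have : Nonempty V := ⟨z⟩
  obtain ⟨j₀, hj₀⟩ := Finite.exists_min h
  suffices h z = h j₀ from this ▸ hj₀ j
  by_contra hne
  have key : ∀ a, Relation.ReflTransGen (fun a b => 0 < A a b) a j₀ → h a = h j₀ := by
    intro a hpath
    induction hpath using Relation.ReflTransGen.head_induction_on with
    | refl => rfl
    | head hab _ ih =>
      rw [← ih]
      exact eq_of_lap_eq_zero_of_forall_le hEul (by rw [ih]; exact hj₀)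
        (hh _ fun hbz => hne (hbz ▸ ih)) hab
  exact hne (key z (hConn z j₀))

end Laplacian

variable [DecidableEq V]

lemma lap_delta (A : V → V → ℕ) (a j : V) :
    lap A (delta a) j = A a j - if j = a then (deg A j : ℤ) else 0 := by
  simp only [lap, delta, mul_ite, mul_one, mul_zero, Finset.sum_ite_eq', Finset.mem_univ, if_true]
  split_ifs with h
  · subst h
    ring
  · ring

lemma lap_delta_nonneg (A : V → V → ℕ) {a j : V} (hj : j ≠ a) : 0 ≤ lap A (delta a) j := by
  simp [lap_delta, hj]

lemma lap_one_sub_delta {A : V → V → ℕ} (hEul : Eulerian A) (z : V) :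
    lap A (1 - delta z) = -lap A (delta z) := by
  rw [lap_sub, show (1 : V → ℤ) = fun _ => 1 from rfl, lap_const hEul, zero_sub]

section Toppling

variable (A : V → V → ℕ) {F : V → Prop}

lemma toppleAt_eq (s : V → ℤ) (a : V) : toppleAt A s a = s + lap A (delta a) := rfl

lemma applySeq_eq (s : V → ℤ) (l : List V) : applySeq A s l = s + lap A (countVec l) := by
  induction l generalizing s with
  | nil =>
    funext i
    simp [applySeq]
  | cons a l ih =>
    change applySeq A (toppleAt A s a) l = _
    rw [ih, toppleAt_eq, countVec_cons, lap_add, add_assoc]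

lemma validSeq_mono {s s' : V → ℤ} (h : ∀ i, ¬F i → s i ≤ s' i) {l : List V}
    (hl : ValidSeq A F s l) : ValidSeq A F s' l := by
  induction l generalizing s s' with
  | nil => trivial
  | cons a l ih =>
    obtain ⟨hFa, hdeg, htail⟩ := hl
    exact ⟨hFa, hdeg.trans (h a hFa),
      ih (fun i hi => (add_le_add_iff_right _).2 (h i hi)) htail⟩

lemma validSeq_congr {s s' : V → ℤ} (h : ∀ i, ¬F i → s i = s' i) {l : List V}
    (hl : ValidSeq A F s l) : ValidSeq A F s' l :=
  validSeq_mono A (fun i hi => (h i hi).le) hl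

lemma validSeq_of_imp {F' : V → Prop} (hF : ∀ i, F' i → F i) {s : V → ℤ} {l : List V}
    (hl : ValidSeq A F s l) : ValidSeq A F' s l := by
  induction l generalizing s with
  | nil => trivial
  | cons a l ih =>
    obtain ⟨hFa, hdeg, htail⟩ := hl
    exact ⟨fun h => hFa (hF a h), hdeg, ih htail⟩

lemma validSeq_append {s : V → ℤ} {l₁ l₂ : List V} (h₁ : ValidSeq A F s l₁)
    (h₂ : ValidSeq A F (applySeq A s l₁) l₂) : ValidSeq A F s (l₁ ++ l₂) := by
  induction l₁ generalizing s with
  | nil => exact h₂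
  | cons a l ih =>
    obtain ⟨hFa, hdeg, htail⟩ := h₁
    exact ⟨hFa, hdeg, ih htail h₂⟩

lemma validSeq_flatten_replicate {x : ℕ → V → ℤ} {l : List V}
    (hl : ∀ k, ValidSeq A F (x (k + 1)) l) (hx : ∀ k, applySeq A (x (k + 1)) l = x k) (n : ℕ) :
    ValidSeq A F (x n) (List.replicate n l).flatten := by
  induction n with
  | zero => trivial
  | succ n ih =>
    rw [List.replicate_succ, List.flatten_cons]
    exact validSeq_append A (hl n) (by rwa [hx])

lemma countVec_eq_zero_of_validSeq {s : V → ℤ} {l : List V} (hl : ValidSeq A F s l) {i : V}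
    (hi : F i) : countVec l i = 0 := by
  induction l generalizing s with
  | nil => rfl
  | cons a l ih =>
    obtain ⟨hFa, _, htail⟩ := hl
    have hia : i ≠ a := fun h => hFa (h ▸ hi)
    simp [countVec_cons, delta, hia, ih htail]

/-- Least action principle. -/
lemma countVec_le_of_stableOff {s ν : V → ℤ} {l : List V} (hl : ValidSeq A F s l)
    (hν : 0 ≤ ν) (hstab : StableOff A F (s + lap A ν)) : countVec l ≤ ν := by
  induction l generalizing s ν with
  | nil => simpa using hν
  | cons a l ih =>
    obtain ⟨hFa, hdeg, htail⟩ := hl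
    have hνa : 1 ≤ ν a := by
      by_contra! h
      have hlap := lap_nonneg_of_eq_zero A hν (le_antisymm (by omega) (hν a))
      have := hstab a hFa
      simp only [Pi.add_apply] at this
      omega
    have hν' : 0 ≤ ν - delta a := fun i => by
      by_cases h : i = a
      · subst h
        simpa [delta] using hνa
      · simpa [delta, h] using hν i
    have := ih htail hν' (by rwa [toppleAt_eq, lap_sub, add_add_sub_cancel])
    rw [countVec_cons]
    exact le_sub_iff_add_le'.1 this

lemma countVec_le_of_stabilizesTo {s : V → ℤ} {l₀ l : List V} (h₀ : StabilizesTo A F s l₀)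
    (hl : ValidSeq A F s l) : countVec l ≤ countVec l₀ :=
  countVec_le_of_stableOff A hl (countVec_nonneg l₀) (applySeq_eq A s l₀ ▸ h₀.2)

lemma stabilizableVia_of_length_le (n : ℕ) :
    ∀ s, (∀ l, ValidSeq A F s l → l.length ≤ n) → StabilizableVia A F s := by
  induction n with
  | zero =>
    refine fun s hs => ⟨[], trivial, fun i hFi => ?_⟩
    by_contra h
    simpa using hs [i] ⟨hFi, by change ¬ s i ≤ _ at h; omega, trivial⟩
  | succ n ih =>
    intro s hs
    by_cases hst : StableOff A F s
    · exact ⟨[], trivial, hst⟩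
    obtain ⟨i, hFi, hi⟩ : ∃ i, ¬F i ∧ (deg A i : ℤ) ≤ s i := by
      simp only [StableOff, not_forall] at hst
      obtain ⟨i, hFi, hi⟩ := hst
      exact ⟨i, hFi, by omega⟩
    obtain ⟨l, hl, hfin⟩ := ih (toppleAt A s i) fun l hl => by
      simpa using hs (i :: l) ⟨hFi, hi, hl⟩
    exact ⟨i :: l, ⟨hFi, hi, hl⟩, hfin⟩

lemma stabilizableVia_of_countVec_le {s : V → ℤ} (B : V → ℤ)
    (hB : ∀ l, ValidSeq A F s l → countVec l ≤ B) : StabilizableVia A F s := by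
  refine stabilizableVia_of_length_le A (∑ i, B i).toNat s fun l hl => ?_
  have : (l.length : ℤ) ≤ ∑ i, B i := by
    rw [← sum_countVec]
    exact Finset.sum_le_sum fun i _ => hB l hl i
  exact_mod_cast this.trans (Int.self_le_toNat _)

lemma stabilizableVia_of_stableOff {s ν : V → ℤ} (hν : 0 ≤ ν)
    (hstab : StableOff A F (s + lap A ν)) : StabilizableVia A F s :=
  stabilizableVia_of_countVec_le A ν fun _ hl => countVec_le_of_stableOff A hl hν hstab

lemma stabilizesTo_stabSeq {s : V → ℤ} (h : StabilizableVia A F s) :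
    StabilizesTo A F s (stabSeq A F s) := by
  rw [stabSeq, dif_pos h]
  exact h.choose_spec

variable {A}

lemma stabilizable_iff_exists_stableOff (hEul : Eulerian A) (s : V → ℤ) :
    Stabilizable A s ↔ ∃ ν, StableOff A (fun _ => False) (s + lap A ν) := by
  refine ⟨fun ⟨l, _, hst⟩ => ⟨countVec l, applySeq_eq A s l ▸ hst⟩, fun ⟨ν, hν⟩ => ?_⟩
  obtain ⟨N, hN⟩ := exists_nat_ge (-ν)
  refine stabilizableVia_of_stableOff A (ν := ν + fun _ => (N : ℤ)) (fun i => ?_) ?_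
  · have := hN i
    simp only [Pi.neg_apply, Pi.add_apply, Pi.zero_apply] at this ⊢
    omega
  · rwa [lap_add, lap_const hEul, add_zero]

lemma stabilizable_add_lap_iff (hEul : Eulerian A) (s v : V → ℤ) :
    Stabilizable A (s + lap A v) ↔ Stabilizable A s := by
  simp only [stabilizable_iff_exists_stableOff hEul]
  constructor
  · rintro ⟨ν, hν⟩
    exact ⟨v + ν, by rwa [lap_add, ← add_assoc]⟩
  · rintro ⟨ν, hν⟩
    exact ⟨ν - v, by rwa [lap_sub, add_add_sub_cancel]⟩

end Toppling

section SinkStabilization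

variable (A : V → V → ℕ) {F : V → Prop}

lemma min_le_toppleAt {s : V → ℤ} {a : V} (hdeg : (deg A a : ℤ) ≤ s a) (j : V) :
    min (s j) 0 ≤ toppleAt A s a j := by
  have := Int.natCast_nonneg (A a j)
  simp only [toppleAt, lap_delta]
  split_ifs with h
  · subst h
    omega
  · omega

lemma min_le_applySeq {s : V → ℤ} {l : List V} (hl : ValidSeq A F s l) (j : V) :
    min (s j) 0 ≤ applySeq A s l j := by
  induction l generalizing s with
  | nil => exact min_le_left _ _
  | cons a l ih =>
    obtain ⟨_, hdeg, htail⟩ := hl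
    have h₁ := min_le_toppleAt A hdeg j
    have h₂ := ih htail
    change _ ≤ applySeq A (toppleAt A s a) l j
    omega

lemma applySeq_le {s : V → ℤ} {l : List V} (hl : ValidSeq A F s l) (j : V) :
    applySeq A s l j ≤ ∑ k, s k - ∑ k, min (s k) 0 := by
  have hmass : ∑ k, applySeq A s l k = ∑ k, s k := by
    simp [applySeq_eq, Finset.sum_add_distrib, sum_lap]
  have := Finset.single_le_sum (f := fun k => applySeq A s l k - min (s k) 0)
    (fun k _ => sub_nonneg.2 (min_le_applySeq A hl k)) (Finset.mem_univ j)
  rw [Finset.sum_sub_distrib, hmass] at this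
  linarith [min_le_right (s j) 0]

lemma countVec_le_of_edge {s : V → ℤ} {l : List V} (hl : ValidSeq A F s l) {i j : V}
    (hij : 0 < A i j) :
    countVec l i ≤ deg A j * countVec l j + (∑ k, s k - ∑ k, min (s k) 0) - s j := by
  have hfin := congrFun (applySeq_eq A s l) j
  have hup := applySeq_le A hl j
  have hterm : (A i j : ℤ) * countVec l i ≤ ∑ k, (A k j : ℤ) * countVec l k :=
    Finset.single_le_sum (f := fun k => (A k j : ℤ) * countVec l k)
      (fun k _ => mul_nonneg (Int.natCast_nonneg _) (countVec_nonneg l k)) (Finset.mem_univ i)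
  have hA : (1 : ℤ) ≤ A i j := by exact_mod_cast hij
  have hc : countVec l i ≤ A i j * countVec l i :=
    le_mul_of_one_le_left (countVec_nonneg l i) hA
  simp only [Pi.add_apply, lap] at hfin
  linarith

lemma exists_countVec_le_of_reflTransGen (s : V → ℤ) {i z : V} (hz : F z)
    (hpath : Relation.ReflTransGen (fun a b => 0 < A a b) i z) :
    ∃ B : ℤ, ∀ l, ValidSeq A F s l → countVec l i ≤ B := by
  induction hpath using Relation.ReflTransGen.head_induction_on with
  | refl => exact ⟨0, fun l hl => (countVec_eq_zero_of_validSeq A hl hz).le⟩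
  | @head a b hab _ ih =>
    obtain ⟨B, hB⟩ := ih
    refine ⟨deg A b * B + (∑ k, s k - ∑ k, min (s k) 0) - s b, fun l hl => ?_⟩
    have := mul_le_mul_of_nonneg_left (hB l hl) (Int.natCast_nonneg (deg A b))
    linarith [countVec_le_of_edge A hl hab]

variable {A}

lemma stabilizableVia_of_connected (hConn : Connected A) {z : V} (hz : F z) (s : V → ℤ) :
    StabilizableVia A F s := by
  choose B hB using fun i => exists_countVec_le_of_reflTransGen A s hz (hConn i z)
  exact stabilizableVia_of_countVec_le A B fun l hl i => hB i l hl

end SinkStabilization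

section Recurrent

variable {A : V → V → ℕ} {z : V}

lemma ZRec.exists_burning (hEul : Eulerian A) {ρ : V → ℤ} (hρ : ZRec A z ρ) :
    ∃ l, ValidSeq A (· = z) (ρ + lap A (delta z)) l ∧ countVec l = 1 - delta z ∧
      applySeq A (ρ + lap A (delta z)) l = ρ := by
  obtain ⟨-, -, l, ⟨hl, -⟩, hcount⟩ := hρ
  have hc : countVec l = 1 - delta z := by
    funext i
    by_cases hi : i = z
    · subst hi
      simp [countVec_eq_zero_of_validSeq A hl rfl, delta]
    · simp [countVec, hcount i hi, delta, hi]
  refine ⟨l, hl, hc, ?_⟩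
  rw [applySeq_eq, hc, lap_one_sub_delta hEul, add_neg_cancel_right]

lemma nonpos_of_zRec_eq (hEul : Eulerian A) {ρ₁ ρ₂ v : V → ℤ} {m : ℤ} (h₁ : ZRec A z ρ₁)
    (h₂ : ZRec A z ρ₂) (hvz : v z = 0) (h : ρ₁ = ρ₂ + m • delta z + lap A v) : v ≤ 0 := by
  obtain ⟨l, hl, hc, -⟩ := h₁.exists_burning hEul
  obtain ⟨N, hN⟩ := exists_nat_ge v
  set x : ℕ → V → ℤ := fun k => ρ₁ + (k : ℤ) • lap A (delta z) with hx
  have hxl : ∀ k, ValidSeq A (· = z) (x (k + 1)) l := fun k => by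
    refine validSeq_mono A (fun i hi => ?_) hl
    have := lap_delta_nonneg A hi
    simp only [hx, Pi.add_apply, Pi.smul_apply, smul_eq_mul]
    push_cast
    nlinarith
  have hxx : ∀ k, applySeq A (x (k + 1)) l = x k := fun k => by
    rw [applySeq_eq, hc, lap_one_sub_delta hEul, hx]
    push_cast
    module
  set ν : V → ℤ := (N : ℤ) • (1 - delta z) - v with hν
  have hν0 : 0 ≤ ν := fun i => by
    by_cases hi : i = z
    · subst hi
      simp [hν, delta, hvz]
    · simpa [hν, delta, hi] using hN i
  have hstab : StableOff A (· = z) (x N + lap A ν) := by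
    have : x N + lap A ν = ρ₂ + m • delta z := by
      rw [hν, hx, lap_sub, lap_smul, lap_one_sub_delta hEul, h]
      module
    rw [this]
    intro i hi
    simpa [delta, hi] using h₂.2.1 i hi
  have hle := countVec_le_of_stableOff A (validSeq_flatten_replicate A hxl hxx N) hν0 hstab
  rw [countVec_flatten_replicate, hc] at hle
  intro i
  have := hle i
  simp only [hν, Pi.sub_apply] at this
  simp only [Pi.zero_apply]
  linarith

lemma ZDecomp.eq {s ρ v : V → ℤ} {m : ℤ} (hd : ZDecomp A z s ρ m v) :
    s = ρ + m • delta z + lap A v :=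
  funext hd.2.2

lemma ZDecomp.unique (hEul : Eulerian A) {s ρ₁ ρ₂ v₁ v₂ : V → ℤ} {m₁ m₂ : ℤ}
    (hd₁ : ZDecomp A z s ρ₁ m₁ v₁) (hd₂ : ZDecomp A z s ρ₂ m₂ v₂) :
    ρ₁ = ρ₂ ∧ m₁ = m₂ ∧ v₁ = v₂ := by
  have e := hd₁.eq.symm.trans hd₂.eq
  have h₁₂ : ρ₁ = ρ₂ + (m₂ - m₁) • delta z + lap A (v₂ - v₁) := by
    rw [lap_sub, sub_smul]
    linear_combination (norm := abel) e
  have h₂₁ : ρ₂ = ρ₁ + (m₁ - m₂) • delta z + lap A (v₁ - v₂) := by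
    rw [lap_sub, sub_smul]
    linear_combination (norm := abel) -e
  have hv₁ := nonpos_of_zRec_eq hEul hd₁.1 hd₂.1 (by simp [hd₁.2.1, hd₂.2.1]) h₁₂
  have hv₂ := nonpos_of_zRec_eq hEul hd₂.1 hd₁.1 (by simp [hd₁.2.1, hd₂.2.1]) h₂₁
  obtain rfl : v₁ = v₂ := le_antisymm (sub_nonpos.1 hv₂) (sub_nonpos.1 hv₁)
  obtain rfl : m₁ = m₂ := by
    simpa [hd₁.1.1, hd₂.1.1, delta, sub_eq_zero, eq_comm] using congrFun h₁₂ z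
  simpa using h₁₂

lemma stableOff_add_smul_delta {ρ : V → ℤ} (hρ : ZRec A z ρ) {m : ℤ} (hm : m < 0) :
    StableOff A (fun _ => False) (ρ + m • delta z) := by
  intro i _
  by_cases hi : i = z
  · subst hi
    simpa [delta, hρ.1] using hm
  · simpa [delta, hi] using hρ.2.1 i hi

lemma not_stabilizable_add_smul_delta (hEul : Eulerian A) {ρ : V → ℤ} (hρ : ZRec A z ρ) {m : ℤ}
    (hm : 0 ≤ m) : ¬ Stabilizable A (ρ + m • delta z) := by
  set Z := ρ + m • delta z with hZ
  obtain ⟨l, hl, hc, -⟩ := hρ.exists_burning hEul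
  have hZz : (deg A z : ℤ) ≤ Z z := by simp [hZ, delta, hρ.1, hm]
  have hoff : ∀ i, ¬ i = z → (ρ + lap A (delta z)) i = toppleAt A Z z i := by
    intro i hi
    simp [hZ, toppleAt, delta, hi]
  have hcycle : ValidSeq A (fun _ => False) Z (z :: l) :=
    ⟨not_false, hZz, validSeq_of_imp A (fun _ h => h.elim) (validSeq_congr A hoff hl)⟩
  have hret : applySeq A Z (z :: l) = Z := by
    change applySeq A (toppleAt A Z z) l = Z
    rw [applySeq_eq, hc, toppleAt_eq, lap_one_sub_delta hEul, add_neg_cancel_right]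
  rintro ⟨l₀, h₀⟩
  obtain ⟨n, hn⟩ := exists_nat_ge (countVec l₀)
  have := countVec_le_of_stabilizesTo A h₀
    (validSeq_flatten_replicate A (x := fun _ => Z) (fun _ => hcycle) (fun _ => hret) (n + 1)) z
  rw [countVec_flatten_replicate, countVec_cons, hc, add_sub_cancel] at this
  simp only [Pi.smul_apply, Pi.one_apply, smul_eq_mul, mul_one] at this
  push_cast at this
  linarith [hn z]

lemma ZDecomp.stabilizable_iff (hEul : Eulerian A) {s ρ v : V → ℤ} {m : ℤ}
    (hd : ZDecomp A z s ρ m v) : Stabilizable A s ↔ m < 0 := by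
  rw [hd.eq, stabilizable_add_lap_iff hEul]
  refine ⟨fun h => ?_, fun hm => ⟨[], trivial, stableOff_add_smul_delta hd.1 hm⟩⟩
  by_contra! hm
  exact not_stabilizable_add_smul_delta hEul hd.1 hm h

end Recurrent

section Existence

variable (A : V → V → ℕ) (z : V) (s : V → ℤ)

def sinkIter : ℕ → V → ℤ
  | 0 => s
  | N + 1 => sinkStabilize A z (sinkIter N + lap A (delta z))

def sinkIterSeq (N : ℕ) : List V := stabSeq A (· = z) (sinkIter A z s N + lap A (delta z))

lemma sinkIter_zero : sinkIter A z s 0 = s := rfl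

lemma sinkIter_succ (N : ℕ) :
    sinkIter A z s (N + 1) =
      sinkIter A z s N + lap A (delta z) + lap A (countVec (sinkIterSeq A z s N)) :=
  applySeq_eq ..

lemma sinkIter_add (M k : ℕ) :
    sinkIter A z s (M + k) = sinkIter A z s M + (k : ℤ) • lap A (delta z) +
      lap A (∑ t ∈ Finset.range k, countVec (sinkIterSeq A z s (M + t))) := by
  induction k with
  | zero => simp
  | succ k ih =>
    rw [← add_assoc, sinkIter_succ, ih, Finset.sum_range_succ, lap_add]
    push_cast
    module

variable {A z s}

lemma stabilizesTo_sinkIterSeq (hConn : Connected A) (N : ℕ) :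
    StabilizesTo A (· = z) (sinkIter A z s N + lap A (delta z)) (sinkIterSeq A z s N) :=
  stabilizesTo_stabSeq A (stabilizableVia_of_connected hConn (F := (· = z)) rfl _)

lemma stableOff_sinkIter (hConn : Connected A) {N : ℕ} (hN : N ≠ 0) :
    StableOff A (· = z) (sinkIter A z s N) := by
  obtain ⟨N, rfl⟩ := Nat.exists_eq_succ_of_ne_zero hN
  exact (stabilizesTo_sinkIterSeq hConn N).2

lemma countVec_sinkIterSeq_self (hConn : Connected A) (N : ℕ) :
    countVec (sinkIterSeq A z s N) z = 0 :=
  countVec_eq_zero_of_validSeq A (stabilizesTo_sinkIterSeq hConn N).1 rfl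

lemma min_le_sinkIter (hConn : Connected A) {j : V} (hj : j ≠ z) (N : ℕ) :
    min (s j) 0 ≤ sinkIter A z s N j := by
  induction N with
  | zero => exact min_le_left _ _
  | succ N ih =>
    have h₁ := min_le_applySeq A (stabilizesTo_sinkIterSeq (z := z) (s := s) hConn N).1 j
    have h₂ := lap_delta_nonneg A hj
    simp only [Pi.add_apply] at h₁
    change _ ≤ applySeq A _ (sinkIterSeq A z s N) j
    omega

lemma exists_sinkIter_add_eq (hConn : Connected A) :
    ∃ M k, M ≠ 0 ∧ k ≠ 0 ∧ ∀ j, j ≠ z → sinkIter A z s (M + k) j = sinkIter A z s M j := by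
  let g : ℕ → ∀ j : {j : V // j ≠ z}, Finset.Icc (min (s j) 0) ((deg A j : ℤ) - 1) :=
    fun N j => ⟨sinkIter A z s (N + 1) j, Finset.mem_Icc.2
      ⟨min_le_sinkIter hConn j.2 _, stableOff_sinkIter hConn N.succ_ne_zero j j.2⟩⟩
  obtain ⟨N₁, N₂, hne, heq⟩ := Finite.exists_ne_map_eq_of_infinite g
  wlog hlt : N₁ < N₂ generalizing N₁ N₂
  · exact this N₂ N₁ hne.symm heq.symm (by omega)
  refine ⟨N₁ + 1, N₂ - N₁, by omega, by omega, fun j hj => ?_⟩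
  rw [show N₁ + 1 + (N₂ - N₁) = N₂ + 1 by omega]
  exact congrArg Subtype.val (congrFun heq ⟨j, hj⟩) |>.symm

lemma countVec_le_one_sub_delta (hEul : Eulerian A) {x : V → ℤ} {l : List V}
    (hx : StableOff A (· = z) x) (hl : ValidSeq A (· = z) (x + lap A (delta z)) l) :
    countVec l ≤ 1 - delta z := by
  refine countVec_le_of_stableOff A hl (fun i => ?_) ?_
  · by_cases hi : i = z <;> simp [delta, hi]
  · rwa [lap_one_sub_delta hEul, add_neg_cancel_right]

lemma countVec_sinkIterSeq_le (hEul : Eulerian A) (hConn : Connected A) {N : ℕ} (hN : N ≠ 0) :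
    countVec (sinkIterSeq A z s N) ≤ 1 - delta z :=
  countVec_le_one_sub_delta hEul (stableOff_sinkIter hConn hN) (stabilizesTo_sinkIterSeq hConn N).1

lemma le_sum_countVec_sinkIterSeq (hEul : Eulerian A) (hConn : Connected A) {M k : ℕ}
    (hper : ∀ j, j ≠ z → sinkIter A z s (M + k) j = sinkIter A z s M j) {j : V} (hj : j ≠ z) :
    (k : ℤ) ≤ ∑ t ∈ Finset.range k, countVec (sinkIterSeq A z s (M + t)) j := by
  obtain ⟨W, hW⟩ : ∃ W, W = ∑ t ∈ Finset.range k, countVec (sinkIterSeq A z s (M + t)) :=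
    ⟨_, rfl⟩
  rw [← Finset.sum_apply, ← hW]
  have hWz : W z = 0 := by
    simp [hW, Finset.sum_apply, countVec_sinkIterSeq_self hConn]
  have hharm : ∀ j, j ≠ z → lap A ((k : ℤ) • delta z + W) j = 0 := by
    intro j hj
    have := congrFun (sinkIter_add A z s M k) j
    rw [hper j hj, ← hW] at this
    rw [lap_add, lap_smul]
    simp only [Pi.add_apply, Pi.smul_apply, smul_eq_mul] at this ⊢
    linarith
  simpa [delta, hj, hWz] using le_of_lap_eq_zero_off hEul hConn hharm j

lemma exists_countVec_sinkIterSeq_eq (hEul : Eulerian A) (hConn : Connected A) :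
    ∃ M, M ≠ 0 ∧ countVec (sinkIterSeq A z s M) = 1 - delta z := by
  obtain ⟨M, k, hM, hk, hper⟩ := exists_sinkIter_add_eq (z := z) (s := s) hConn
  refine ⟨M, hM, le_antisymm (countVec_sinkIterSeq_le hEul hConn hM) fun j => ?_⟩
  by_cases hj : j = z
  · subst hj
    simp [delta, countVec_sinkIterSeq_self hConn]
  obtain ⟨k, rfl⟩ := Nat.exists_eq_succ_of_ne_zero hk
  have hsum := le_sum_countVec_sinkIterSeq hEul hConn hper hj
  rw [Finset.sum_range_succ', add_zero] at hsum
  have hrest : ∑ t ∈ Finset.range k, countVec (sinkIterSeq A z s (M + (t + 1))) j ≤ k := by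
    calc _ ≤ ∑ t ∈ Finset.range k, (1 : ℤ) := Finset.sum_le_sum fun t _ => by
          simpa [delta, hj] using
            countVec_sinkIterSeq_le (z := z) (s := s) hEul hConn (N := M + (t + 1)) (by omega) j
      _ = k := by simp
  simp only [delta, if_neg hj, Pi.sub_apply, Pi.one_apply, sub_zero]
  push_cast at hsum
  linarith

lemma zRec_update {x : V → ℤ} {l : List V} (hx : StableOff A (· = z) x)
    (hl : StabilizesTo A (· = z) (x + lap A (delta z)) l) (hc : countVec l = 1 - delta z) :
    ZRec A z (Function.update x z (deg A z)) := by
  have hoff : ∀ i, ¬ i = z →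
      (x + lap A (delta z)) i = (Function.update x z (deg A z : ℤ) + lap A (delta z)) i := by
    intro i hi
    simp [hi]
  refine ⟨by simp, fun i hi => by simpa [hi] using hx i hi, l,
    ⟨validSeq_congr A hoff hl.1, fun i hi => ?_⟩, fun i hi => ?_⟩
  · have := hl.2 i hi
    rw [applySeq_eq] at this ⊢
    simpa [hi] using this
  · simpa [countVec, delta, hi] using congrFun hc i

end Existence

section Decomposition

variable {A : V → V → ℕ}

lemma exists_zRec_eq (hEul : Eulerian A) (hConn : Connected A) (z : V) (s : V → ℤ) :
    ∃ (ρ : V → ℤ) (m : ℤ) (v : V → ℤ), ZRec A z ρ ∧ s = ρ + m • delta z + lap A v := by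
  obtain ⟨M, hM, hc⟩ := exists_countVec_sinkIterSeq_eq (z := z) (s := s) hEul hConn
  set x := sinkIter A z s M with hxdef
  refine ⟨Function.update x z (deg A z), x z - deg A z,
    -((M : ℤ) • delta z + ∑ t ∈ Finset.range M, countVec (sinkIterSeq A z s t)),
    zRec_update (stableOff_sinkIter hConn hM) (stabilizesTo_sinkIterSeq hConn M) hc, ?_⟩
  have hupd : Function.update x z (deg A z : ℤ) + (x z - deg A z) • delta z = x := by
    funext j
    by_cases hj : j = z
    · subst hj
      simp [delta]
    · simp [delta, hj]
  have hx := sinkIter_add A z s 0 M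
  simp only [zero_add, sinkIter_zero] at hx
  rw [hupd, lap_neg, lap_add, lap_smul, hxdef, hx]
  abel

lemma zDecomp_of_eq (hEul : Eulerian A) {z : V} {s ρ v : V → ℤ} {m : ℤ} (hρ : ZRec A z ρ)
    (h : s = ρ + m • delta z + lap A v) : ZDecomp A z s ρ m (v - fun _ => v z) :=
  ⟨hρ, sub_self _, fun j => by rw [lap_sub, lap_const hEul, sub_zero, h]; rfl⟩

end Decomposition

end ThresholdState

open ThresholdState in
/-- **z-Recurrent Decomposition.** Every sandpile `s` has a unique decomposition
`s = ρ + m·δ_z + Δv` with `ρ ∈ Rec(z)`, `m ∈ ℤ`, `v(z) = 0`; moreover `s` is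
stabilizable iff `m < 0`. -/
theorem statement_8 {V : Type*} [Fintype V] [DecidableEq V]
    (A : V → V → ℕ) (hEul : Eulerian A) (hConn : Connected A)
    (z : V) (s : V → ℤ) :
    (∃! t : (V → ℤ) × ℤ × (V → ℤ), ZDecomp A z s t.1 t.2.1 t.2.2) ∧
    (∀ (ρ : V → ℤ) (m : ℤ) (v : V → ℤ), ZDecomp A z s ρ m v →
      (Stabilizable A s ↔ m < 0)) := by
  refine ⟨?_, fun ρ m v hd => hd.stabilizable_iff hEul⟩
  obtain ⟨ρ, m, v, hρ, hs⟩ := exists_zRec_eq hEul hConn z s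
  refine ⟨(ρ, m, _), zDecomp_of_eq hEul hρ hs, fun ⟨ρ', m', v'⟩ hd => ?_⟩
  obtain ⟨rfl, rfl, rfl⟩ := hd.unique hEul (zDecomp_of_eq hEul hρ hs)
  rfl
end
end

section
/- Let S be a finite set, E ⊆ S × S a set of directed edges such that the directed graph (S, E) is strongly connected, and ℓ : E → ℕ a length function satisfying the aperiodicity condition that the gcd of the total lengths of all closed paths with edges in E equals 1. Then there exists L_0 ∈ ℕ such that for every integer L ≥ L_0 there is a closed path with edges in E of total length exactly L. -/
/-!
The lengths of closed walks through a fixed vertex `s` form an additive submonoid of `ℕ`. By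
strong connectivity, any closed walk at another vertex `x` can be spliced into a detour
`s ⟶ x ⟶ s`, so the gcd of the loop lengths at `s` divides every closed-walk length and hence
equals `1`. A submonoid of `ℕ` with gcd `1` contains all sufficiently large integers (Schur's
theorem, `Nat.exists_mem_closure_of_ge`).
-/

open scoped BigOperators

namespace PathLength

variable {S : Type*}

/-- Total length of a path (sum of the lengths of its edges). -/
def pathLen (ℓ : S → S → ℕ) : S → List S → ℕ
  | _, [] => 0
  | x, y :: l => ℓ x y + pathLen ℓ y l

end PathLength

namespace PathLength

variable {S : Type*} (E : S → S → Prop) (ℓ : S → S → ℕ)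

theorem pathLen_append (x : S) (l₁ l₂ : List S) :
    pathLen ℓ x (l₁ ++ l₂) =
      pathLen ℓ x l₁ + pathLen ℓ ((x :: l₁).getLast (List.cons_ne_nil x l₁)) l₂ := by
  induction l₁ generalizing x with
  | nil => simp [pathLen]
  | cons a t ih => simp [pathLen, ih, Nat.add_assoc]

/-- A walk from `x` is encoded by its list of vertices after `x`; the empty walk is allowed, which
makes the loop lengths at a vertex an additive submonoid of `ℕ`. -/
def walkLengths (x y : S) : Set ℕ :=
  {n | ∃ l : List S, (x :: l).IsChain E ∧ (x :: l).getLast (List.cons_ne_nil x l) = y ∧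
    pathLen ℓ x l = n}

variable {E ℓ}

theorem add_mem_walkLengths {x y z : S} {m n : ℕ} (hm : m ∈ walkLengths E ℓ x y)
    (hn : n ∈ walkLengths E ℓ y z) : m + n ∈ walkLengths E ℓ x z := by
  obtain ⟨l₁, hc₁, rfl, rfl⟩ := hm
  obtain ⟨l₂, hc₂, rfl, rfl⟩ := hn
  refine ⟨l₁ ++ l₂, ?_, ?_, pathLen_append ℓ x l₁ l₂⟩
  · rw [← List.cons_append]
    refine hc₁.append hc₂.tail fun a ha b hb => ?_
    rw [List.getLast?_eq_some_getLast (List.cons_ne_nil _ _), Option.mem_some_iff] at ha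
    exact ha ▸ hc₂.rel_head? hb
  · cases l₂ with
    | nil => simp
    | cons b l₂ =>
      rw [List.getLast_cons_cons, List.getLast_cons (by simp),
        List.getLast_append_of_ne_nil (by simp)]

theorem walkLengths_nonempty {x y : S} (h : Relation.ReflTransGen E x y) :
    (walkLengths E ℓ x y).Nonempty :=
  let ⟨l, hc, hlast⟩ := List.exists_isChain_cons_of_relationReflTransGen h
  ⟨_, l, hc, hlast, rfl⟩

variable (E ℓ) in
def loopLengths (x : S) : AddSubmonoid ℕ where
  carrier := walkLengths E ℓ x x
  add_mem' := add_mem_walkLengths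
  zero_mem' := ⟨[], .singleton x, rfl, rfl⟩

theorem mem_loopLengths_of_closed {x : S} {l : List S} (hc : (x :: l).IsChain E) (hne : l ≠ [])
    (hlast : l.getLast? = some x) : pathLen ℓ x l ∈ loopLengths E ℓ x := by
  refine ⟨l, hc, ?_, rfl⟩
  rw [List.getLast_cons hne]
  simpa [List.getLast?_eq_some_getLast hne] using hlast

theorem exists_closed_of_mem_loopLengths {x : S} {n : ℕ} (h : n ∈ loopLengths E ℓ x)
    (hn : n ≠ 0) : ∃ l : List S, (x :: l).IsChain E ∧ l ≠ [] ∧ l.getLast? = some x ∧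
      pathLen ℓ x l = n := by
  obtain ⟨l, hc, hlast, rfl⟩ := h
  have hne : l ≠ [] := by rintro rfl; exact hn rfl
  refine ⟨l, hc, hne, ?_, rfl⟩
  rw [List.getLast_cons hne] at hlast
  rw [List.getLast?_eq_some_getLast hne, hlast]

theorem setGcd_loopLengths_dvd {s x : S} (hsx : Relation.ReflTransGen E s x)
    (hxs : Relation.ReflTransGen E x s) {n : ℕ} (hn : n ∈ loopLengths E ℓ x) :
    Nat.setGcd (loopLengths E ℓ s) ∣ n := by
  -- with walks of lengths `a : s ⟶ x` and `b : x ⟶ s`, both `a + b` and `a + n + b` are loop lengths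
  obtain ⟨a, ha⟩ := walkLengths_nonempty (ℓ := ℓ) hsx
  obtain ⟨b, hb⟩ := walkLengths_nonempty (ℓ := ℓ) hxs
  have hab := Nat.setGcd_dvd_of_mem (add_mem_walkLengths ha hb)
  have hanb := Nat.setGcd_dvd_of_mem (add_mem_walkLengths (add_mem_walkLengths ha hn) hb)
  rw [Nat.add_right_comm] at hanb
  exact (Nat.dvd_add_right hab).1 hanb

end PathLength

open PathLength in
theorem statement_19_general {S : Type*}
    (E : S → S → Prop) (hconn : ∀ a b : S, Relation.ReflTransGen E a b)
    (ℓ : S → S → ℕ)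
    (hgcd : ∀ d : ℕ,
      (∀ (x : S) (l : List S), List.Chain E x l → l ≠ [] → l.getLast? = some x →
        d ∣ pathLen ℓ x l) → d = 1) :
    ∃ L0 : ℕ, ∀ L : ℕ, L0 ≤ L →
      ∃ (x : S) (l : List S), List.Chain E x l ∧ l ≠ [] ∧ l.getLast? = some x ∧
        pathLen ℓ x l = L := by
  obtain _ | ⟨⟨s⟩⟩ := isEmpty_or_nonempty S
  · exact absurd (hgcd 2 fun x => isEmptyElim x) (by decide)
  have hgcd_one : Nat.setGcd (loopLengths E ℓ s) = 1 :=
    hgcd _ fun x l hc hne hlast =>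
      setGcd_loopLengths_dvd (hconn s x) (hconn x s) (mem_loopLengths_of_closed hc hne hlast)
  obtain ⟨L0, hL0⟩ := Nat.exists_mem_closure_of_ge (loopLengths E ℓ s : Set ℕ)
  refine ⟨L0 + 1, fun L hL => ⟨s, ?_⟩⟩
  have hmem : L ∈ loopLengths E ℓ s := by
    simpa only [AddSubmonoid.closure_eq] using hL0 L (by omega) (hgcd_one ▸ one_dvd L)
  exact exists_closed_of_mem_loopLengths hmem (by omega)

open PathLength in
/-- If the directed graph `(S, E)` is finite and strongly connected and the gcd
of the total lengths of closed paths is `1`, then every sufficiently large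
integer is the total length of some closed path. -/
theorem statement_19 {S : Type*} [Fintype S]
    (E : S → S → Prop) (hconn : ∀ a b : S, Relation.ReflTransGen E a b)
    (ℓ : S → S → ℕ)
    (hgcd : ∀ d : ℕ,
      (∀ (x : S) (l : List S), List.Chain E x l → l ≠ [] → l.getLast? = some x →
        d ∣ pathLen ℓ x l) → d = 1) :
    ∃ L0 : ℕ, ∀ L : ℕ, L0 ≤ L →
      ∃ (x : S) (l : List S), List.Chain E x l ∧ l ≠ [] ∧ l.getLast? = some x ∧
        pathLen ℓ x l = L :=
  statement_19_general E hconn ℓ hgcd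
end
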